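/- Every relevant period extends to a reliable period of the same color: if v is relevant to u, then there exists z ∈ Σ* such that col_u(vz) = col_u(v) and vz is u-reliable. -/

import Mathlib

open scoped Classical

/-- Concatenation of a finite word with an infinite word. -/
def wcat {A : Type} (u : List A) (w : ℕ → A) : ℕ → A :=
  fun n => if h : n < u.length then u.get ⟨n, h⟩ else w (n - u.length)

/-- The infinite periodic word `v^ω`. -/
def wpow {A : Type} [Inhabited A] (v : List A) : ℕ → A :=
  fun n => v.getD (n % v.length) default

/-- The ultimately periodic word `u · v^ω`. -/
def upw {A : Type} [Inhabited A] (u v : List A) : ℕ → A := wcat u (wpow v)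

/-- The finite word `v^i`. -/
def wrep {A : Type} (v : List A) (i : ℕ) : List A := (List.replicate i v).flatten

/-- The right congruence `x ∼_L y`. -/
def simL {A : Type} (L : Set (ℕ → A)) (x y : List A) : Prop :=
  ∀ w : ℕ → A, wcat x w ∈ L ↔ wcat y w ∈ L

/-- `w` is `u`-invariant: `u ∼_L u·w`. -/
def UInv {A : Type} (L : Set (ℕ → A)) (u w : List A) : Prop := simL L u (u ++ w)

/-- `v` is relevant to `u`. -/
def URel {A : Type} (L : Set (ℕ → A)) (u v : List A) : Prop :=
  ∃ z : List A, UInv L u (v ++ z)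

/-- `v` has natural color at most `c` wrt `u`. -/
def ColorAtMost {A : Type} [Inhabited A] (L : Set (ℕ → A)) (u : List A) :
    ℕ → List A → Prop
  | c, v => ∀ z : List A, UInv L u (v ++ z) →
      ((upw u (v ++ z) ∈ L ↔ Even c) ∨
        ∃ i : ℕ, 0 < i ∧ ∃ c' : Fin c, ColorAtMost L u c' (wrep (v ++ z) i))
  termination_by c => c
  decreasing_by exact c'.isLt

/-- The natural color of the finite word `v` wrt `u`: `⊥` (i.e. `-∞`) if `v` is
irrelevant to `u`, and otherwise the minimal `c ≥ 0` as in the paper. -/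
noncomputable def ncol {A : Type} [Inhabited A] (L : Set (ℕ → A)) (u v : List A) :
    WithBot ℕ :=
  if URel L u v then ((sInf {c : ℕ | ColorAtMost L u c v} : ℕ) : WithBot ℕ) else ⊥

/-- `v` is stable wrt `u`. -/
def Stable {A : Type} [Inhabited A] (L : Set (ℕ → A)) (u v : List A) : Prop :=
  ∀ i : ℕ, 0 < i → ncol L u v = ncol L u (wrep v i)

/-- `v` is `u`-reliable. -/
def UReliable {A : Type} [Inhabited A] (L : Set (ℕ → A)) (u v : List A) : Prop :=
  UInv L u v ∧ Stable L u v

/-- The natural color of an ultimately periodic infinite word. -/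
noncomputable def icol {A : Type} [Inhabited A] (L : Set (ℕ → A)) (w : ℕ → A) : ℕ :=
  sInf {c : ℕ | ∃ u v : List A, v ≠ [] ∧ w = upw u v ∧ UInv L u v ∧
    ncol L u v = (c : WithBot ℕ)}

/-- The set of states visited infinitely often by a run. -/
def infSet {Q : Type} (r : ℕ → Q) : Set Q := {q | ∀ n : ℕ, ∃ m : ℕ, n ≤ m ∧ r m = q}

/-- The run of a complete deterministic automaton on an infinite word. -/
def runOf {A Q : Type} (δ : Q → A → Q) (q0 : Q) (w : ℕ → A) : ℕ → Q
  | 0 => q0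
  | n + 1 => δ (runOf δ q0 w n) (w n)

/-- `L` is ω-regular: recognized by some deterministic Muller automaton. -/
def OmegaRegular {A : Type} (L : Set (ℕ → A)) : Prop :=
  ∃ (Q : Type) (_ : Fintype Q) (q0 : Q) (δ : Q → A → Q) (α : Set (Set Q)),
    ∀ w : ℕ → A, w ∈ L ↔ infSet (runOf δ q0 w) ∈ α

/-! If `v` has minimal colour `c > 0`, the failure of colour `c - 1` is witnessed by an invariant
extension `vz` of the wrong parity none of whose powers has colour `< c - 1`; the parity then
excludes `c - 1` for the powers as well, and since colours can only drop along extensions and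
powers, every power of `vz` has colour exactly `c`. Colour `0` is kept by any invariant extension.
If `v` has no colour at all, the same argument run with a bound `B` on all colours makes every
power of `vz` colourless. Such a bound exists because the colour of a word depends only on its
profile in a deterministic Muller automaton for `L` (its state map and the states it visits), and
there are finitely many profiles. -/

section Words
variable {A : Type}

theorem wcat_cons_succ (a : A) (x : List A) (w : ℕ → A) (n : ℕ) :
    wcat (a :: x) w (n + 1) = wcat x w n := by
  simp only [wcat, List.length_cons, List.get_eq_getElem, Nat.add_lt_add_iff_right,
    List.getElem_cons_succ, Nat.add_sub_add_right]

theorem wcat_append (x y : List A) (w : ℕ → A) :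
    wcat (x ++ y) w = wcat x (wcat y w) := by
  induction x with
  | nil => rfl
  | cons a x ih =>
    funext n
    cases n with
    | zero => rfl
    | succ n => rw [List.cons_append, wcat_cons_succ, wcat_cons_succ, ih]

theorem eq_of_wcat_eq_self {x : List A} (hx : x ≠ []) {w w' : ℕ → A}
    (hw : wcat x w = w) (hw' : wcat x w' = w') : w = w' := by
  have hlen : 0 < x.length := List.length_pos_iff.2 hx
  funext n
  induction n using Nat.strong_induction_on with
  | _ n ih =>
    rw [← hw, ← hw']
    unfold wcat
    split_ifs
    · rfl
    · exact ih _ (by omega)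

theorem wrep_succ (v : List A) (i : ℕ) : wrep v (i + 1) = v ++ wrep v i := by
  simp [wrep, List.replicate_succ]

@[simp] theorem wrep_one (v : List A) : wrep v 1 = v := by simp [wrep]

@[simp] theorem wrep_nil (i : ℕ) : wrep ([] : List A) i = [] := by simp [wrep]

@[simp] theorem length_wrep (v : List A) (i : ℕ) : (wrep v i).length = i * v.length := by
  simp [wrep, List.sum_replicate]

theorem wrep_add (v : List A) (i j : ℕ) : wrep v (i + j) = wrep v i ++ wrep v j := by
  rw [wrep, wrep, wrep, List.replicate_add, List.flatten_append]

theorem wrep_wrep (v : List A) (i j : ℕ) : wrep (wrep v i) j = wrep v (i * j) := by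
  induction j with
  | zero => rfl
  | succ j ih => rw [wrep_succ, ih, Nat.mul_succ, Nat.add_comm, wrep_add]

theorem simL.symm {L : Set (ℕ → A)} {x y : List A} (h : simL L x y) : simL L y x :=
  fun w => (h w).symm

theorem simL.trans {L : Set (ℕ → A)} {x y z : List A} (h : simL L x y)
    (h' : simL L y z) : simL L x z :=
  fun w => (h w).trans (h' w)

theorem simL.append_right {L : Set (ℕ → A)} {x y : List A} (h : simL L x y) (z : List A) :
    simL L (x ++ z) (y ++ z) := by
  intro w
  rw [wcat_append, wcat_append]
  exact h _

theorem uinv_append {L : Set (ℕ → A)} {u x y : List A} (hx : UInv L u x)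
    (hy : UInv L u y) : UInv L u (x ++ y) := by
  have := hy.trans (hx.append_right y)
  rwa [List.append_assoc] at this

theorem uinv_wrep {L : Set (ℕ → A)} {u v : List A} (h : UInv L u v) (i : ℕ) :
    UInv L u (wrep v i) := by
  induction i with
  | zero => simp [UInv, wrep, simL]
  | succ i ih => rw [wrep_succ]; exact uinv_append h ih

theorem urel_of_uinv {L : Set (ℕ → A)} {u v : List A} (h : UInv L u v) : URel L u v :=
  ⟨[], by rwa [List.append_nil]⟩

end Words

section PeriodicWords
variable {A : Type} [Inhabited A]

theorem wcat_wpow (w : List A) : wcat w (wpow w) = wpow w := by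
  funext n
  unfold wcat wpow
  split_ifs with hn
  · rw [Nat.mod_eq_of_lt hn, List.getD_eq_getElem _ _ hn, List.get_eq_getElem]
  · rw [Nat.mod_eq_sub_mod (a := n) (by omega)]

theorem wcat_wrep_wpow (w : List A) (t : ℕ) : wcat (wrep w t) (wpow w) = wpow w := by
  induction t with
  | zero => rfl
  | succ t ih => rw [wrep_succ, wcat_append, ih, wcat_wpow]

theorem wpow_wrep (w : List A) {i : ℕ} (hi : 0 < i) : wpow (wrep w i) = wpow w := by
  rcases eq_or_ne w [] with rfl | hw
  · rw [wrep_nil]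
  · have hne : wrep w i ≠ [] := by
      rw [← List.length_pos_iff, length_wrep]
      exact Nat.mul_pos hi (List.length_pos_iff.2 hw)
    exact eq_of_wcat_eq_self hne (wcat_wpow _) (wcat_wrep_wpow w i)

theorem upw_wrep (u v : List A) {i : ℕ} (hi : 0 < i) : upw u (wrep v i) = upw u v := by
  rw [upw, upw, wpow_wrep v hi]

end PeriodicWords

section Color
variable {A : Type} [Inhabited A] {L : Set (ℕ → A)} {u : List A}

theorem ncol_of_urel {v : List A} (h : URel L u v) :
    ncol L u v = ((sInf {c | ColorAtMost L u c v} : ℕ) : WithBot ℕ) :=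
  if_pos h

theorem ColorAtMost.append {c : ℕ} {v : List A} (h : ColorAtMost L u c v) (w : List A) :
    ColorAtMost L u c (v ++ w) := by
  rw [ColorAtMost] at h ⊢
  intro z hz
  rw [List.append_assoc] at hz ⊢
  exact h (w ++ z) hz

theorem ColorAtMost.succ {c : ℕ} {v : List A} (h : ColorAtMost L u c v) :
    ColorAtMost L u (c + 1) v := by
  rw [ColorAtMost]
  intro z _
  exact Or.inr ⟨1, one_pos, ⟨c, c.lt_succ_self⟩, by rw [wrep_one]; exact h.append z⟩

theorem ColorAtMost.mono {c d : ℕ} {v : List A} (h : ColorAtMost L u c v) (hcd : c ≤ d) :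
    ColorAtMost L u d v := by
  induction d, hcd using Nat.le_induction with
  | base => exact h
  | succ d _ ih => exact ih.succ

theorem ColorAtMost.wrep {c : ℕ} {v : List A} (h : ColorAtMost L u c v) {i : ℕ}
    (hi : 0 < i) : ColorAtMost L u c (wrep v i) := by
  obtain ⟨j, rfl⟩ := Nat.exists_eq_add_of_lt hi
  rw [Nat.zero_add, wrep_succ]
  exact h.append _

theorem exists_uinv_forall_not_colorAtMost_wrep {d : ℕ} {v : List A}
    (h : ¬ ColorAtMost L u d v) :
    ∃ z, UInv L u (v ++ z) ∧ ∀ i, 0 < i → ∀ e ≤ d, ¬ ColorAtMost L u e (wrep (v ++ z) i) := by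
  rw [ColorAtMost] at h
  simp only [not_forall, not_or, not_exists, not_and] at h
  obtain ⟨z, hz, hparity, hlow⟩ := h
  refine ⟨z, hz, fun i hi e he hcol => ?_⟩
  have hcol := hcol.mono he
  rw [ColorAtMost] at hcol
  rcases hcol [] (by rw [List.append_nil]; exact uinv_wrep hz i) with hpar | ⟨j, hj, c, hc⟩
  · rw [List.append_nil, upw_wrep u _ hi] at hpar
    exact hparity hpar
  · rw [List.append_nil, wrep_wrep] at hc
    exact hlow (i * j) (Nat.mul_pos hi hj) c hc

theorem exists_uinv_forall_sInf_colorAtMost_wrep {B : ℕ}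
    (hB : ∀ x : List A, sInf {c | ColorAtMost L u c x} ≤ B) {v : List A} (hrel : URel L u v) :
    ∃ z, UInv L u (v ++ z) ∧ ∀ i, 0 < i →
      sInf {c | ColorAtMost L u c (wrep (v ++ z) i)} = sInf {c | ColorAtMost L u c v} := by
  by_cases hne : {c | ColorAtMost L u c v}.Nonempty
  · have hv : ColorAtMost L u (sInf {c | ColorAtMost L u c v}) v := Nat.sInf_mem hne
    rcases Nat.eq_zero_or_eq_succ_pred (sInf {c | ColorAtMost L u c v}) with h0 | hsucc
    · obtain ⟨z, hz⟩ := hrel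
      refine ⟨z, hz, fun i hi => ?_⟩
      rw [h0] at hv ⊢
      exact Nat.sInf_eq_zero.2 (Or.inl ((hv.append z).wrep hi))
    · set d := (sInf {c | ColorAtMost L u c v}).pred
      obtain ⟨z, hz, hlow⟩ := exists_uinv_forall_not_colorAtMost_wrep
        (Nat.notMem_of_lt_sInf (hsucc ▸ d.lt_succ_self) : ¬ ColorAtMost L u d v)
      refine ⟨z, hz, fun i hi => le_antisymm (Nat.sInf_le ((hv.append z).wrep hi)) ?_⟩
      rw [hsucc]
      exact le_csInf ⟨_, (hv.append z).wrep hi⟩ fun e he => by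
        by_contra! hed
        exact hlow i hi e (Nat.lt_succ_iff.1 hed) he
  · -- `v` has no colour, so `ncol` is the junk value `sInf ∅ = 0`; the powers must stay colourless.
    obtain ⟨z, hz, hlow⟩ := exists_uinv_forall_not_colorAtMost_wrep
      (fun h => hne ⟨B, h⟩ : ¬ ColorAtMost L u B v)
    refine ⟨z, hz, fun i hi => ?_⟩
    have hempty : {c | ColorAtMost L u c (wrep (v ++ z) i)} = ∅ :=
      Set.eq_empty_of_forall_notMem fun e he => hlow i hi _ (hB _) (Nat.sInf_mem ⟨e, he⟩)
    rw [hempty, Set.not_nonempty_iff_eq_empty.1 hne]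

end Color

section Runs
variable {A Q : Type} (δ : Q → A → Q)

theorem mem_infSet_iff {r : ℕ → Q} {q : Q} : q ∈ infSet r ↔ ∃ᶠ n in Filter.atTop, r n = q :=
  Filter.frequently_atTop.symm

theorem infSet_comp_add (r : ℕ → Q) (k : ℕ) : infSet (fun n => r (n + k)) = infSet r := by
  ext q
  rw [mem_infSet_iff, mem_infSet_iff]
  conv_rhs => rw [← Filter.map_add_atTop_eq_nat k]
  exact Iff.rfl

theorem runOf_succ' (q : Q) (w : ℕ → A) (n : ℕ) :
    runOf δ q w (n + 1) = runOf δ (δ q (w 0)) (fun k => w (k + 1)) n := by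
  induction n with
  | zero => rfl
  | succ n ih => rw [runOf, ih]; rfl

theorem runOf_wcat (q : Q) (x : List A) (w : ℕ → A) (n : ℕ) :
    runOf δ q (wcat x w) (n + x.length) = runOf δ (x.foldl δ q) w n := by
  induction x generalizing q with
  | nil => rfl
  | cons a x ih =>
    rw [List.length_cons, ← Nat.add_assoc, runOf_succ']
    simp only [wcat_cons_succ, List.foldl_cons]
    exact ih (δ q a)

theorem infSet_runOf_wcat (q : Q) (x : List A) (w : ℕ → A) :
    infSet (runOf δ q (wcat x w)) = infSet (runOf δ (x.foldl δ q) w) := by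
  rw [← infSet_comp_add _ x.length]
  simp only [runOf_wcat]

theorem foldl_wrep (q : Q) (w : List A) (t : ℕ) :
    (wrep w t).foldl δ q = (fun p => w.foldl δ p)^[t] q := by
  induction t generalizing q with
  | zero => rfl
  | succ t ih => rw [wrep_succ, List.foldl_append, ih, Function.iterate_succ_apply]

variable [Inhabited A]

theorem runOf_wpow_of_le (q : Q) (w : List A) {r : ℕ} (hr : r ≤ w.length) :
    runOf δ q (wpow w) r = (w.take r).foldl δ q := by
  have hwpow : wpow w = wcat (w.take r) (wcat (w.drop r) (wpow w)) := by
    rw [← wcat_append, List.take_append_drop, wcat_wpow]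
  have := runOf_wcat δ q (w.take r) (wcat (w.drop r) (wpow w)) 0
  rw [Nat.zero_add, List.length_take_of_le hr] at this
  rw [hwpow]
  exact this

theorem runOf_wpow (q : Q) (w : List A) (t : ℕ) {r : ℕ} (hr : r ≤ w.length) :
    runOf δ q (wpow w) (r + t * w.length) =
      (w.take r).foldl δ ((fun p => w.foldl δ p)^[t] q) := by
  rw [← wcat_wrep_wpow w t, ← length_wrep, runOf_wcat, foldl_wrep, runOf_wpow_of_le δ _ w hr]

def visited (q : Q) (x : List A) : Set Q := {p | ∃ k < x.length, (x.take k).foldl δ q = p}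

theorem infSet_runOf_wpow [Finite Q] (q : Q) {w : List A} (hw : w ≠ []) :
    infSet (runOf δ q (wpow w)) =
      ⋃ p ∈ infSet (fun t => (fun p => w.foldl δ p)^[t] q), visited δ p w := by
  have hlen : 0 < w.length := List.length_pos_iff.2 hw
  ext s
  simp only [Set.mem_iUnion, mem_infSet_iff, exists_prop]
  constructor
  · intro hs
    have hblock : ∃ᶠ m in Filter.atTop, ∃ p,
        (fun p => w.foldl δ p)^[m / w.length] q = p ∧ s ∈ visited δ p w := by
      refine hs.mono fun m hm => ⟨_, rfl, m % w.length, Nat.mod_lt _ hlen, ?_⟩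
      rw [← hm, ← runOf_wpow δ q w _ (Nat.mod_lt _ hlen).le, Nat.mod_add_div']
    have := (Nat.tendsto_div_const_atTop hlen.ne').frequently
      (p := fun t => ∃ p, (fun p => w.foldl δ p)^[t] q = p ∧ s ∈ visited δ p w) hblock
    -- pigeonhole: one block-boundary state recurs infinitely often among the blocks visiting `s`
    simpa only [Filter.frequently_exists, Filter.frequently_and_distrib_right] using this
  · rintro ⟨p, hp, k, hk, rfl⟩
    have hmono : Filter.Tendsto (fun t => k + t * w.length) Filter.atTop Filter.atTop :=
      Filter.tendsto_atTop_mono (fun t => (Nat.le_mul_of_pos_right t hlen).trans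
        (Nat.le_add_left _ k)) Filter.tendsto_id
    exact hmono.frequently (hp.mono fun t ht => by rw [runOf_wpow δ q w t hk.le, ht])

end Runs

section Profiles
variable {A Q : Type} (δ : Q → A → Q)

theorem visited_append (q : Q) (x y : List A) :
    visited δ q (x ++ y) = visited δ q x ∪ visited δ (x.foldl δ q) y := by
  ext p
  constructor
  · rintro ⟨k, hk, rfl⟩
    rw [List.length_append] at hk
    rcases lt_or_ge k x.length with h | h
    · exact Or.inl ⟨k, h, by rw [List.take_append_of_le_length h.le]⟩
    · refine Or.inr ⟨k - x.length, by omega, ?_⟩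
      rw [List.take_append, List.take_of_length_le h, List.foldl_append]
  · rintro (⟨k, hk, rfl⟩ | ⟨k, hk, rfl⟩)
    · exact ⟨k, by rw [List.length_append]; omega, by rw [List.take_append_of_le_length hk.le]⟩
    · refine ⟨x.length + k, by rw [List.length_append]; omega, ?_⟩
      rw [List.take_append, List.take_of_length_le (by omega), List.foldl_append,
        Nat.add_sub_cancel_left]

theorem visited_eq_empty_iff (q : Q) (x : List A) : visited δ q x = ∅ ↔ x = [] := by
  refine ⟨fun h => ?_, fun h => by simp [visited, h]⟩
  by_contra hx
  exact h.subset ⟨0, List.length_pos_iff.2 hx, rfl⟩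

/-- Everything a deterministic Muller automaton can observe of the finite word `x`. -/
def profile (x : List A) : (Q → Q) × (Q → Set Q) :=
  (fun q => x.foldl δ q, fun q => visited δ q x)

variable {δ}

theorem profile_eq_iff {x y : List A} :
    profile δ x = profile δ y ↔
      (∀ q, x.foldl δ q = y.foldl δ q) ∧ ∀ q, visited δ q x = visited δ q y := by
  simp only [profile, Prod.ext_iff, funext_iff]

theorem profile_append_congr {x x' y y' : List A} (hx : profile δ x = profile δ x')
    (hy : profile δ y = profile δ y') : profile δ (x ++ y) = profile δ (x' ++ y') := by
  rw [profile_eq_iff] at hx hy ⊢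
  refine ⟨fun q => ?_, fun q => ?_⟩
  · rw [List.foldl_append, List.foldl_append, hx.1, hy.1]
  · rw [visited_append, visited_append, hx.1, hx.2, hy.2]

theorem profile_wrep_congr {x y : List A} (h : profile δ x = profile δ y) (i : ℕ) :
    profile δ (wrep x i) = profile δ (wrep y i) := by
  induction i with
  | zero => rfl
  | succ i ih => rw [wrep_succ, wrep_succ]; exact profile_append_congr h ih

end Profiles

section Transfer
variable {A Q : Type} {L : Set (ℕ → A)} {δ : Q → A → Q} {q0 : Q}
  {α : Set (Set Q)}

theorem simL_of_foldl_eq (hL : ∀ w, w ∈ L ↔ infSet (runOf δ q0 w) ∈ α) {x y : List A}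
    (h : x.foldl δ q0 = y.foldl δ q0) : simL L x y := fun w => by
  rw [hL, hL, infSet_runOf_wcat, infSet_runOf_wcat, h]

theorem uinv_iff_of_profile_eq (hL : ∀ w, w ∈ L ↔ infSet (runOf δ q0 w) ∈ α) (u : List A)
    {x y : List A} (h : profile δ x = profile δ y) : UInv L u x ↔ UInv L u y := by
  have hxy : simL L (u ++ x) (u ++ y) := simL_of_foldl_eq hL (by
    rw [List.foldl_append, List.foldl_append, (profile_eq_iff.1 h).1])
  exact ⟨fun hx => hx.trans hxy, fun hy => hy.trans hxy.symm⟩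

theorem upw_mem_iff_of_profile_eq [Inhabited A] [Finite Q] (hL : ∀ w, w ∈ L ↔ infSet (runOf δ q0 w) ∈ α)
    (u : List A) {x y : List A} (h : profile δ x = profile δ y) :
    upw u x ∈ L ↔ upw u y ∈ L := by
  obtain ⟨hfoldl, hvisited⟩ := profile_eq_iff.1 h
  rcases eq_or_ne x [] with rfl | hx
  · rw [(visited_eq_empty_iff δ q0 y).1 (by rw [← hvisited, visited_eq_empty_iff])]
  have hy : y ≠ [] := by
    rw [ne_eq, ← visited_eq_empty_iff δ q0, ← hvisited, visited_eq_empty_iff]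
    exact hx
  have hf : (fun p => x.foldl δ p) = fun p => y.foldl δ p := funext hfoldl
  rw [hL, hL, upw, upw, infSet_runOf_wcat, infSet_runOf_wcat, infSet_runOf_wpow δ _ hx,
    infSet_runOf_wpow δ _ hy, hf]
  simp only [hvisited]

theorem ColorAtMost.of_profile_eq [Inhabited A] [Finite Q] (hL : ∀ w, w ∈ L ↔ infSet (runOf δ q0 w) ∈ α)
    {u : List A} {c : ℕ} {x y : List A} (h : profile δ x = profile δ y)
    (hx : ColorAtMost L u c x) : ColorAtMost L u c y := by
  induction c using Nat.strong_induction_on generalizing x y with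
  | _ c ih =>
    rw [ColorAtMost] at hx ⊢
    intro z hz
    have hxz : profile δ (x ++ z) = profile δ (y ++ z) := profile_append_congr h rfl
    rcases hx z ((uinv_iff_of_profile_eq hL u hxz).2 hz) with hpar | ⟨i, hi, c', hc'⟩
    · exact Or.inl ((upw_mem_iff_of_profile_eq hL u hxz).symm.trans hpar)
    · exact Or.inr ⟨i, hi, c', ih c' c'.isLt (profile_wrep_congr hxz i) hc'⟩

end Transfer

theorem exists_forall_le_of_factorsThrough {α β : Type} [Finite β] {F : α → ℕ} {g : α → β}
    (h : F.FactorsThrough g) : ∃ B, ∀ x, F x ≤ B := by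
  obtain ⟨B, hB⟩ := Finite.bddAbove_range (Function.extend g F 0)
  exact ⟨B, fun x => h.extend_apply 0 x ▸ hB ⟨g x, rfl⟩⟩

theorem OmegaRegular.exists_forall_sInf_colorAtMost_le {A : Type} [Inhabited A]
    {L : Set (ℕ → A)} (hL : OmegaRegular L) (u : List A) :
    ∃ B, ∀ x, sInf {c | ColorAtMost L u c x} ≤ B := by
  obtain ⟨Q, _, q0, δ, α, hδ⟩ := hL
  refine exists_forall_le_of_factorsThrough (g := profile δ) fun x y h => ?_
  congr 1
  ext c
  exact ⟨ColorAtMost.of_profile_eq hδ h, ColorAtMost.of_profile_eq hδ h.symm⟩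

theorem extend_to_reliable_same_color_general {A : Type} [Inhabited A] (L : Set (ℕ → A))
    (hreg : OmegaRegular L) (u v : List A) (hrel : URel L u v) :
    ∃ z : List A, ncol L u (v ++ z) = ncol L u v ∧ UReliable L u (v ++ z) := by
  obtain ⟨B, hB⟩ := hreg.exists_forall_sInf_colorAtMost_le u
  obtain ⟨z, hz, hcol⟩ := exists_uinv_forall_sInf_colorAtMost_wrep hB hrel
  have hncol : ∀ i, 0 < i → ncol L u (wrep (v ++ z) i) = ncol L u v := fun i hi => by
    rw [ncol_of_urel (urel_of_uinv (uinv_wrep hz i)), ncol_of_urel hrel, hcol i hi]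
  have hncol₁ := hncol 1 one_pos
  rw [wrep_one] at hncol₁
  exact ⟨z, hncol₁, hz, fun i hi => hncol₁.trans (hncol i hi).symm⟩

/-- every relevant period extends to a reliable period of the same
color. -/
theorem extend_to_reliable_same_color {A : Type} [Inhabited A] (L : Set (ℕ → A))
    (hreg : OmegaRegular L) (u v : List A) (hv : v ≠ []) (hrel : URel L u v) :
    ∃ z : List A, ncol L u (v ++ z) = ncol L u v ∧ UReliable L u (v ++ z) :=
  extend_to_reliable_same_color_general L hreg u v hrel
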